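/- arXiv:1901.09461 — 3 statements merged into one kernel-verified Lean document; each statement's English description precedes it below -/
import Mathlib

section
/- Let T be a triangulated Krull-Schmidt category. Then the Rouquier dimension of T equals zero if and only if T contains only finitely many indecomposable objects up to isomorphism and shift. -/
open CategoryTheory Limits Pretriangulated

universe u v

namespace TriDim

variable {T : Type u} [Category.{v} T] [HasZeroObject T] [Preadditive T] [HasShift T ℤ]
  [∀ n : ℤ, (CategoryTheory.shiftFunctor T n).Additive] [Pretriangulated T]

/-- `[E]₀` : objects isomorphic to finite direct sums of shifts of `E`. -/
def isSumOfShifts (E X : T) : Prop :=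
  ∃ (n : ℕ) (f : Fin n → ℤ), Nonempty (X ≅ ⨁ fun i => (shiftFunctor T (f i)).obj E)

/-- `[E]ₙ` : objects obtained from `[E]₀` by `n` cones. -/
def gen (E : T) : ℕ → Set T
  | 0 => {X | isSumOfShifts E X}
  | n + 1 => {F | ∃ Tr : Triangle T, Tr ∈ (distTriang T) ∧
      Nonempty (Tr.obj₂ ≅ F) ∧ Tr.obj₁ ∈ gen E n ∧ isSumOfShifts E Tr.obj₃}

/-- `⟨E⟩ₙ` : direct summands of objects of `[E]ₙ`. -/
def thick (E : T) (n : ℕ) : Set T :=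
  {X | ∃ Z ∈ gen E n, ∃ (s : X ⟶ Z) (r : Z ⟶ X), s ≫ r = 𝟙 X}

variable (T) in
/-- The Rouquier dimension of `T` is at most `n`:
there is a strong generator generating in `n` cones. -/
def rdimLE (n : ℕ) : Prop := ∃ E : T, ∀ X : T, X ∈ thick E n

end TriDim

/-- An object is indecomposable if it is nonzero and in any direct sum
decomposition one of the summands vanishes. -/
def TriDim.Indecomposable {T : Type u} [Category.{v} T] [HasZeroObject T] [Preadditive T]
    [HasShift T ℤ] [∀ n : ℤ, (CategoryTheory.shiftFunctor T n).Additive] [Pretriangulated T]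
    (X : T) : Prop :=
  ¬ Limits.IsZero X ∧ ∀ Y Z : T, Nonempty (X ≅ Y ⊞ Z) → Limits.IsZero Y ∨ Limits.IsZero Z

section Aux

set_option linter.unusedSectionVars false

variable {T : Type u} [Category.{v} T] [HasZeroObject T] [Preadditive T] [HasShift T ℤ]
  [∀ n : ℤ, (CategoryTheory.shiftFunctor T n).Additive] [Pretriangulated T]

/-- If a finite sum of endomorphisms is a unit and `End X` is local, some summand is a unit. -/
lemma TriDimAux.isUnit_of_sum {X : T} (hX : ¬ IsZero X)
    (hl : ∀ f g : End X, IsUnit (f + g) → IsUnit f ∨ IsUnit g)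
    {m : ℕ} (e : Fin m → End X) (h : IsUnit (∑ i, e i)) : ∃ i, IsUnit (e i) := by
  induction m with
  | zero =>
    exfalso
    simp only [Finset.univ_eq_empty, Finset.sum_empty] at h
    have h01 : (0 : End X) = 1 := isUnit_zero_iff.mp h
    exact hX ((IsZero.iff_id_eq_zero X).mpr h01.symm)
  | succ n ih =>
    rw [Fin.sum_univ_succ] at h
    rcases hl _ _ h with h1 | h2
    · exact ⟨0, h1⟩
    · obtain ⟨i, hi⟩ := ih (fun i => e i.succ) h2
      exact ⟨i.succ, hi⟩

/-- A direct summand of a finite biproduct is a direct summand of one of the factors,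
provided its endomorphism ring is local. -/
lemma TriDimAux.summand_of_biproduct {X : T} (hX : ¬ IsZero X)
    (hl : ∀ f g : End X, IsUnit (f + g) → IsUnit f ∨ IsUnit g)
    {m : ℕ} {Y : Fin m → T} (s : X ⟶ ⨁ Y) (r : ⨁ Y ⟶ X) (hsr : s ≫ r = 𝟙 X) :
    ∃ (i : Fin m) (s' : X ⟶ Y i) (r' : Y i ⟶ X), s' ≫ r' = 𝟙 X := by
  set e : Fin m → End X := fun i => s ≫ biproduct.π Y i ≫ biproduct.ι Y i ≫ r with he
  have htot : (∑ i, e i) = (1 : End X) := by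
    show (∑ i, s ≫ biproduct.π Y i ≫ biproduct.ι Y i ≫ r) = 𝟙 X
    rw [← hsr]
    conv_rhs => rw [← Category.id_comp r, ← biproduct.total]
    rw [Preadditive.sum_comp, Preadditive.comp_sum]
    simp [Category.assoc]
  obtain ⟨i, hi⟩ := TriDimAux.isUnit_of_sum hX hl e (htot ▸ isUnit_one)
  obtain ⟨u, hu⟩ := hi
  refine ⟨i, s ≫ biproduct.π Y i, biproduct.ι Y i ≫ r ≫ (↑u⁻¹ : End X), ?_⟩
  have key : (e i : X ⟶ X) ≫ (↑u⁻¹ : End X) = 𝟙 X := by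
    have h1 : (↑u⁻¹ : End X) * (↑u : End X) = 1 := u.inv_mul
    rw [hu] at h1
    exact h1
  calc (s ≫ biproduct.π Y i) ≫ biproduct.ι Y i ≫ r ≫ (↑u⁻¹ : End X)
      = (s ≫ biproduct.π Y i ≫ biproduct.ι Y i ≫ r) ≫ (↑u⁻¹ : End X) := by
        simp only [Category.assoc]
    _ = 𝟙 X := key

/-- A nonzero direct summand of an object with local endomorphism ring is isomorphic to it. -/
lemma TriDimAux.iso_of_summand {X Y : T} (hX : ¬ IsZero X)
    (hl : ∀ f g : End Y, IsUnit (f + g) → IsUnit f ∨ IsUnit g)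
    (s : X ⟶ Y) (r : Y ⟶ X) (hsr : s ≫ r = 𝟙 X) : Nonempty (X ≅ Y) := by
  set e : End Y := r ≫ s with hedef
  have hee : e * e = e := by
    rw [End.mul_def, hedef]
    rw [Category.assoc, ← Category.assoc s r, hsr, Category.id_comp]
  have hsum : IsUnit (e + (1 - e)) := by
    have h1 : e + (1 - e) = 1 := by abel
    rw [h1]; exact isUnit_one
  rcases hl e (1 - e) hsum with h | h
  · have he1 : e = 1 := by
      exact h.mul_left_cancel (a := e) (show e * e = e * 1 by rw [mul_one]; exact hee)
    refine ⟨⟨s, r, hsr, ?_⟩⟩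
    show r ≫ s = 𝟙 Y
    have : (e : Y ⟶ Y) = 𝟙 Y := he1
    rw [← hedef]; exact this
  · exfalso
    obtain ⟨u, hu⟩ := h
    have hinv : ((1 : End Y) - e) ≫ (↑u⁻¹ : End Y) = 𝟙 Y := by
      have h1 : (↑u⁻¹ : End Y) * (↑u : End Y) = 1 := u.inv_mul
      rw [hu] at h1
      exact h1
    have h0 : s ≫ ((1 : End Y) - e) = 0 := by
      have : ((1 : End Y) - e : Y ⟶ Y) = 𝟙 Y - (r ≫ s) := rfl
      rw [this, Preadditive.comp_sub, Category.comp_id, ← Category.assoc, hsr,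
        Category.id_comp, sub_self]
    have hs0 : s = 0 := by
      calc s = s ≫ 𝟙 Y := by rw [Category.comp_id]
        _ = s ≫ (((1 : End Y) - e) ≫ (↑u⁻¹ : End Y)) := by rw [hinv]
        _ = (s ≫ ((1 : End Y) - e)) ≫ (↑u⁻¹ : End Y) := by rw [Category.assoc]
        _ = 0 := by rw [h0, zero_comp]
    exact hX ((IsZero.iff_id_eq_zero X).mpr (by rw [← hsr, hs0, zero_comp]))

lemma TriDimAux.isZero_shift_iff (X : T) (k : ℤ) :
    IsZero ((shiftFunctor T k).obj X) ↔ IsZero X := by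
  constructor
  · intro h
    have h2 := (shiftFunctor T (-k)).map_isZero h
    exact h2.of_iso ((shiftEquiv T k).unitIso.app X)
  · intro h
    exact (shiftFunctor T k).map_isZero h

lemma TriDimAux.indec_shift {X : T} (hX : TriDim.Indecomposable X) (k : ℤ) :
    TriDim.Indecomposable ((shiftFunctor T k).obj X) := by
  constructor
  · intro h
    exact hX.1 ((TriDimAux.isZero_shift_iff X k).mp h)
  · rintro Y Z ⟨iso⟩
    have : PreservesBinaryBiproducts (shiftFunctor T (-k)) :=
      preservesBinaryBiproducts_of_preservesBiproducts _
    have i2 : X ≅ (shiftFunctor T (-k)).obj Y ⊞ (shiftFunctor T (-k)).obj Z :=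
      (shiftEquiv T k).unitIso.app X ≪≫ (shiftFunctor T (-k)).mapIso iso ≪≫
        (shiftFunctor T (-k)).mapBiprod Y Z
    rcases hX.2 _ _ ⟨i2⟩ with h | h
    · exact Or.inl ((TriDimAux.isZero_shift_iff Y (-k)).mp h)
    · exact Or.inr ((TriDimAux.isZero_shift_iff Z (-k)).mp h)

end Aux

/-- Let `T` be a triangulated Krull–Schmidt category (every object is a
finite direct sum of indecomposables, and indecomposables have local endomorphism rings).
Then the Rouquier dimension of `T` is zero if and only if `T` contains only finitely many
indecomposable objects up to isomorphism and shift. -/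
theorem rouquier_dim_zero_iff_finitely_many_indecomposables
    {T : Type u} [Category.{v} T] [HasZeroObject T] [Preadditive T] [HasShift T ℤ]
    [∀ n : ℤ, (CategoryTheory.shiftFunctor T n).Additive] [Pretriangulated T]
    -- Krull–Schmidt: existence of decompositions into indecomposables
    (hdecomp : ∀ X : T, ∃ (n : ℕ) (f : Fin n → T),
      (∀ i, TriDim.Indecomposable (f i)) ∧ Nonempty (X ≅ ⨁ f))
    -- Krull–Schmidt: indecomposables have local endomorphism rings
    (hlocal : ∀ X : T, TriDim.Indecomposable X →
      ∀ f g : End X, IsUnit (f + g) → IsUnit f ∨ IsUnit g) :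
    TriDim.rdimLE T 0 ↔
      ∃ (n : ℕ) (f : Fin n → T), ∀ X : T, TriDim.Indecomposable X →
        ∃ (i : Fin n) (k : ℤ), Nonempty (X ≅ (shiftFunctor T k).obj (f i)) := by
  constructor
  · rintro ⟨E, hE⟩
    obtain ⟨n, g, hg, ⟨eE⟩⟩ := hdecomp E
    refine ⟨n, g, fun X hX => ?_⟩
    obtain ⟨Z, hZ, s, r, hsr⟩ := hE X
    obtain ⟨m, k, ⟨eZ⟩⟩ := hZ
    -- X is a summand of ⨁ (E⟦k i⟧)
    obtain ⟨i, s1, r1, h1⟩ := TriDimAux.summand_of_biproduct hX.1 (hlocal X hX)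
      (s ≫ eZ.hom) (eZ.inv ≫ r)
      (by rw [Category.assoc, Iso.hom_inv_id_assoc, hsr])
    -- E⟦k i⟧ ≅ ⨁ (g j ⟦k i⟧)
    let F := shiftFunctor T (k i)
    let eB : F.obj E ≅ ⨁ (F.obj ∘ g) := F.mapIso eE ≪≫ F.mapBiproduct g
    obtain ⟨j, s2, r2, h2⟩ := TriDimAux.summand_of_biproduct hX.1 (hlocal X hX)
      (s1 ≫ eB.hom) (eB.inv ≫ r1)
      (by rw [Category.assoc, Iso.hom_inv_id_assoc, h1])
    have hind : TriDim.Indecomposable (F.obj (g j)) := TriDimAux.indec_shift (hg j) (k i)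
    obtain ⟨iso⟩ := TriDimAux.iso_of_summand hX.1 (hlocal _ hind) s2 r2 h2
    exact ⟨j, k i, ⟨iso⟩⟩
  · rintro ⟨n, f, hf⟩
    refine ⟨⨁ f, fun X => ?_⟩
    obtain ⟨m, g, hg, ⟨eX⟩⟩ := hdecomp X
    choose idx sh hiso using fun i => hf (g i) (hg i)
    have si : ∀ i : Fin m, ∃ (a : g i ⟶ (shiftFunctor T (sh i)).obj (⨁ f))
        (b : (shiftFunctor T (sh i)).obj (⨁ f) ⟶ g i), a ≫ b = 𝟙 (g i) := by
      intro i
      obtain ⟨e⟩ := hiso i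
      refine ⟨e.hom ≫ (shiftFunctor T (sh i)).map (biproduct.ι f (idx i)),
        (shiftFunctor T (sh i)).map (biproduct.π f (idx i)) ≫ e.inv, ?_⟩
      rw [Category.assoc, ← Category.assoc ((shiftFunctor T (sh i)).map _),
        ← Functor.map_comp, biproduct.ι_π_self, CategoryTheory.Functor.map_id, Category.id_comp,
        Iso.hom_inv_id]
    choose a b hab using si
    refine ⟨⨁ fun i => (shiftFunctor T (sh i)).obj (⨁ f), ⟨m, sh, ⟨Iso.refl _⟩⟩, ?_⟩
    refine ⟨eX.hom ≫ biproduct.map a, biproduct.map b ≫ eX.inv, ?_⟩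
    have hmap : biproduct.map a ≫ biproduct.map b = 𝟙 (⨁ g) := by
      apply biproduct.hom_ext
      intro j
      rw [Category.assoc, biproduct.map_π, ← Category.assoc, biproduct.map_π,
        Category.assoc, hab j, Category.comp_id, Category.id_comp]
    rw [Category.assoc, ← Category.assoc (biproduct.map a), hmap, Category.id_comp,
      Iso.hom_inv_id]
end

section
/- Let R be a commutative Noetherian ring and P^• a perfect complex of R-modules. Then for each integer i, the set {x ∈ Spec R : H^i(P^• ⊗^L_R k(x)) = 0} is open in Spec R. Consequently the functions x ↦ sup(P^• ⊗^L_R k(x)) and x ↦ inf(P^• ⊗^L_R k(x)) are respectively upper and lower semi-continuous on Spec R. -/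
open CategoryTheory Limits

/-- The residue field of `Spec R` at a point `x`. -/
abbrev PrimeSpectrum.resField {R : Type} [CommRing R] (x : PrimeSpectrum R) : Type :=
  IsLocalRing.ResidueField (Localization.AtPrime x.asIdeal)

/-- The fiber `P ⊗_R k(x)` of a complex of `R`-modules at a point `x ∈ Spec R`
(for a complex of projectives this computes the derived fiber `P ⊗^L_R k(x)`). -/
noncomputable def fiberComplex {R : Type} [CommRing R]
    (P : CochainComplex (ModuleCat.{0} R) ℤ) (x : PrimeSpectrum R) :
    CochainComplex (ModuleCat.{0} R) ℤ :=
  ((MonoidalCategory.tensorRight (ModuleCat.of R x.resField)).mapHomologicalComplex _).obj P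

section Auxiliary

open Matrix LinearMap TensorProduct

section field
variable {K : Type} [Field K]

-- submatrix rank ≤ rank
lemma submatrix_rank_le {m a r : ℕ} (M : Matrix (Fin m) (Fin a) K)
    (f : Fin r → Fin m) (g : Fin r → Fin a) : (M.submatrix f g).rank ≤ M.rank := by
  classical
  have h1 : M.submatrix f g =
      ((1 : Matrix (Fin m) (Fin m) K).submatrix f _root_.id) * M *
      ((1 : Matrix (Fin a) (Fin a) K).submatrix _root_.id g) := by
    ext i j
    simp [Matrix.mul_apply, Matrix.one_apply, Finset.sum_ite_eq, Finset.sum_ite_eq']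
  calc (M.submatrix f g).rank = _ := by rw [h1]
    _ ≤ (((1 : Matrix (Fin m) (Fin m) K).submatrix f _root_.id) * M).rank := Matrix.rank_mul_le_left _ _
    _ ≤ M.rank := Matrix.rank_mul_le_right _ _


-- extract an independent subfamily
lemma exists_indep_subfamily {V : Type} [AddCommGroup V] [Module K V]
    {a r : ℕ} (v : Fin a → V) (h : r ≤ Module.finrank K (Submodule.span K (Set.range v))) :
    ∃ g : Fin r → Fin a, LinearIndependent K (v ∘ g) := by
  classical
  obtain ⟨b, hbsub, hbspan, hbind⟩ := exists_linearIndependent K (Set.range v)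
  have hbfin : b.Finite := Set.Finite.subset (Set.finite_range v) hbsub
  haveI : Fintype b := hbfin.fintype
  have hcard : Module.finrank K (Submodule.span K b) = b.toFinset.card :=
    finrank_span_set_eq_card hbind
  have hr : r ≤ Fintype.card b := by
    rw [← Set.toFinset_card, ← hcard, hbspan]; exact h
  obtain ⟨φ⟩ : Nonempty (Fin r ↪ b) := by
    rw [Function.Embedding.nonempty_iff_card_le, Fintype.card_fin]; exact hr
  have hmem : ∀ i : Fin r, (↑(φ i) : V) ∈ Set.range v := fun i => hbsub (φ i).2
  choose g hg using hmem
  refine ⟨g, ?_⟩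
  have : v ∘ g = (Subtype.val : b → V) ∘ φ := funext fun i => hg i
  rw [this]
  exact hbind.comp φ φ.injective

-- rank ≥ r iff nonzero r×r minor
lemma le_rank_iff_minor {m a : ℕ} (M : Matrix (Fin m) (Fin a) K) (r : ℕ) :
    r ≤ M.rank ↔ ∃ (f : Fin r → Fin m) (g : Fin r → Fin a),
      (M.submatrix f g).det ≠ 0 := by
  constructor
  · intro h
    -- get r independent columns
    obtain ⟨g, hg⟩ := exists_indep_subfamily (r := r) (fun j => Mᵀ j)
      (by rw [Matrix.rank_eq_finrank_span_cols] at h; exact h)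
    -- N = columns selected
    set N : Matrix (Fin m) (Fin r) K := M.submatrix _root_.id g with hN
    have hNT : LinearIndependent K (fun i => Nᵀ i) := by
      convert hg using 1 <;> rfl
    have hrankN : Nᵀ.rank = r := by
      rw [LinearIndependent.rank_matrix (M := Nᵀ) hNT, Fintype.card_fin]
    have hrankN' : N.rank = r := by rw [← Matrix.rank_transpose]; exact hrankN
    -- get r independent rows of N
    obtain ⟨f, hf⟩ := exists_indep_subfamily (r := r) (fun i => N i)
      (by show r ≤ Module.finrank K (Submodule.span K (Set.range N.row))
          rw [← Matrix.rank_eq_finrank_span_row]; omega)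
    refine ⟨f, g, ?_⟩
    have hrows : LinearIndependent K (fun i => (M.submatrix f g) i) := by
      convert hf using 1 <;> rfl
    have hu := Matrix.linearIndependent_rows_iff_isUnit.mp hrows
    rw [Matrix.isUnit_iff_isUnit_det] at hu
    exact hu.ne_zero
  · rintro ⟨f, g, hdet⟩
    have hu : IsUnit (M.submatrix f g) := by
      rw [Matrix.isUnit_iff_isUnit_det]; exact hdet.isUnit
    have := Matrix.rank_of_isUnit _ hu
    have hle := submatrix_rank_le M f g
    rw [this, Fintype.card_fin] at hle
    exact hle

-- exactness iff ranks sum to middle dimension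
lemma exact_iff_rank_add_rank {na n nb : ℕ}
    (D : Matrix (Fin n) (Fin na) K) (E : Matrix (Fin nb) (Fin n) K)
    (hED : E * D = 0) :
    Function.Exact D.mulVecLin E.mulVecLin ↔ D.rank + E.rank = n := by
  have hle : LinearMap.range D.mulVecLin ≤ LinearMap.ker E.mulVecLin := by
    rintro _ ⟨y, rfl⟩
    simp only [LinearMap.mem_ker, Matrix.mulVecLin_apply, Matrix.mulVec_mulVec, hED,
      Matrix.zero_mulVec]
  have hrn : Module.finrank K (LinearMap.range E.mulVecLin) +
      Module.finrank K (LinearMap.ker E.mulVecLin) = n := by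
    rw [LinearMap.finrank_range_add_finrank_ker]
    simp [Module.finrank_fintype_fun_eq_card]
  rw [LinearMap.exact_iff]
  constructor
  · intro hexact
    have : Module.finrank K (LinearMap.range D.mulVecLin) =
        Module.finrank K (LinearMap.ker E.mulVecLin) := by rw [← hexact]
    unfold Matrix.rank
    omega
  · intro hrank
    unfold Matrix.rank at hrank
    symm
    apply Submodule.eq_of_le_of_finrank_le hle
    omega


end field

lemma algebraMap_resField_eq_zero_iff {R : Type} [CommRing R] (x : PrimeSpectrum R) (r : R) :
    algebraMap R x.resField r = 0 ↔ r ∈ x.asIdeal := by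
  rw [IsScalarTower.algebraMap_apply R (Localization.AtPrime x.asIdeal) x.resField]
  rw [IsLocalRing.ResidueField.algebraMap_eq, IsLocalRing.residue_eq_zero_iff]
  exact IsLocalization.AtPrime.to_map_mem_maximal_iff _ x.asIdeal r

lemma isOpen_minor_locus {R : Type} [CommRing R] {m a : ℕ} (M : Matrix (Fin m) (Fin a) R)
    (r : ℕ) : IsOpen {x : PrimeSpectrum R |
      ∃ (f : Fin r → Fin m) (g : Fin r → Fin a), (M.submatrix f g).det ∉ x.asIdeal} := by
  have : {x : PrimeSpectrum R |
      ∃ (f : Fin r → Fin m) (g : Fin r → Fin a), (M.submatrix f g).det ∉ x.asIdeal} =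
      ⋃ (f : Fin r → Fin m) (g : Fin r → Fin a),
        ↑(PrimeSpectrum.basicOpen (M.submatrix f g).det) := by
    ext x
    simp [PrimeSpectrum.mem_basicOpen]
  rw [this]
  exact isOpen_iUnion fun f => isOpen_iUnion fun g => (PrimeSpectrum.basicOpen _).2

lemma le_rank_map_iff {R : Type} [CommRing R] {m a : ℕ} (M : Matrix (Fin m) (Fin a) R)
    (x : PrimeSpectrum R) (r : ℕ) :
    r ≤ (M.map (algebraMap R x.resField)).rank ↔
      ∃ (f : Fin r → Fin m) (g : Fin r → Fin a), (M.submatrix f g).det ∉ x.asIdeal := by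
  rw [le_rank_iff_minor]
  apply exists_congr fun f => exists_congr fun g => ?_
  rw [Matrix.submatrix_map, ← RingHom.mapMatrix_apply, ← RingHom.map_det,
    ← algebraMap_resField_eq_zero_iff x]

lemma isOpen_exact_matrix {R : Type} [CommRing R] {na n nb : ℕ}
    (D : Matrix (Fin n) (Fin na) R) (E : Matrix (Fin nb) (Fin n) R) (hED : E * D = 0) :
    IsOpen {x : PrimeSpectrum R |
      Function.Exact (M := Fin na → x.resField)
        ((D.map (algebraMap R x.resField)).mulVecLin)
        ((E.map (algebraMap R x.resField)).mulVecLin)} := by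
  have key : ∀ x : PrimeSpectrum R,
      Function.Exact ((D.map (algebraMap R x.resField)).mulVecLin)
        ((E.map (algebraMap R x.resField)).mulVecLin) ↔
      ∃ r s : ℕ, r + s = n ∧
        (∃ (f : Fin r → Fin n) (g : Fin r → Fin na), (D.submatrix f g).det ∉ x.asIdeal) ∧
        (∃ (f : Fin s → Fin nb) (g : Fin s → Fin n), (E.submatrix f g).det ∉ x.asIdeal) := by
    intro x
    have hED' : (E.map (algebraMap R x.resField)) * (D.map (algebraMap R x.resField)) = 0 := by
      rw [← Matrix.map_mul, hED]; ext i j; simp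
    rw [exact_iff_rank_add_rank _ _ hED']
    constructor
    · intro h
      exact ⟨_, _, h, (le_rank_map_iff D x _).mp le_rfl, (le_rank_map_iff E x _).mp le_rfl⟩
    · rintro ⟨r, s, hrs, hD, hE⟩
      have h1 := (le_rank_map_iff D x r).mpr hD
      have h2 := (le_rank_map_iff E x s).mpr hE
      have h3 := Matrix.rank_add_rank_le_card_of_mul_eq_zero hED'
      rw [Fintype.card_fin] at h3
      omega
  have : {x : PrimeSpectrum R |
      Function.Exact (M := Fin na → x.resField)
        ((D.map (algebraMap R x.resField)).mulVecLin)
        ((E.map (algebraMap R x.resField)).mulVecLin)} =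
      ⋃ (r : ℕ) (s : ℕ) (_ : r + s = n),
        ({x : PrimeSpectrum R |
          ∃ (f : Fin r → Fin n) (g : Fin r → Fin na), (D.submatrix f g).det ∉ x.asIdeal} ∩
         {x : PrimeSpectrum R |
          ∃ (f : Fin s → Fin nb) (g : Fin s → Fin n), (E.submatrix f g).det ∉ x.asIdeal}) := by
    ext x
    simp only [Set.mem_setOf_eq, Set.mem_iUnion, Set.mem_inter_iff, key x]
    tauto
  rw [this]
  exact isOpen_iUnion fun r => isOpen_iUnion fun s => isOpen_iUnion fun _ =>
    (isOpen_minor_locus D r).inter (isOpen_minor_locus E s)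

variable {R : Type} [CommRing R] {K : Type} [CommRing K] [Algebra R K]

/-- `(ι → R) ⊗[R] K ≃ₗ[R] (ι → K)`. -/
noncomputable def tensorPiEquiv (ι : Type) [Fintype ι] [DecidableEq ι] :
    ((ι → R) ⊗[R] K) ≃ₗ[R] (ι → K) :=
  (TensorProduct.comm R (ι → R) K).trans (TensorProduct.piScalarRight R R K ι)

lemma tensorPiEquiv_tmul (ι : Type) [Fintype ι] [DecidableEq ι] (v : ι → R) (c : K) :
    tensorPiEquiv (R := R) ι (v ⊗ₜ c) = fun i => v i • c := by
  simp [tensorPiEquiv, TensorProduct.piScalarRight_apply, TensorProduct.piScalarRightHom_tmul]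

lemma tensorPiEquiv_comm {a n : ℕ} (F : (Fin a → R) →ₗ[R] (Fin n → R)) :
    (((LinearMap.toMatrix' F).map (algebraMap R K)).mulVecLin.restrictScalars R) ∘ₗ
        (tensorPiEquiv (Fin a)).toLinearMap =
      (tensorPiEquiv (Fin n)).toLinearMap ∘ₗ (LinearMap.rTensor K F) := by
  apply TensorProduct.ext'
  intro v c
  simp only [LinearMap.comp_apply, LinearEquiv.coe_coe, LinearMap.rTensor_tmul,
    tensorPiEquiv_tmul, LinearMap.coe_restrictScalars, Matrix.mulVecLin_apply]
  have hFv : F v = (LinearMap.toMatrix' F).mulVec v := by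
    rw [← Matrix.toLin'_apply, Matrix.toLin'_toMatrix']
  rw [hFv]
  ext j
  simp [Matrix.mulVec, dotProduct, Finset.sum_smul, mul_smul, Algebra.smul_def,
    Finset.mul_sum, mul_assoc, map_sum, Finset.sum_mul]

section transfer
variable {R : Type} [CommRing R]
variable {V₁ V₂ V₃ F N : Type}
  [AddCommGroup V₁] [Module R V₁] [AddCommGroup V₂] [Module R V₂]
  [AddCommGroup V₃] [Module R V₃] [AddCommGroup F] [Module R F]
  [AddCommGroup N] [Module R N]

/-- Exactness of the fiber is unchanged when replacing the middle term by a free module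
of which it is a direct summand. -/
lemma exact_rTensor_middle_iff
    (s : V₂ →ₗ[R] F) (π : F →ₗ[R] V₂) (hsπ : π ∘ₗ s = LinearMap.id)
    (f : V₁ →ₗ[R] V₂) (g : V₂ →ₗ[R] V₃) (hgf : g ∘ₗ f = 0) :
    Function.Exact
      (LinearMap.rTensor N ((s ∘ₗ f ∘ₗ LinearMap.fst R V₁ F) +
        (LinearMap.snd R V₁ F - s ∘ₗ π ∘ₗ LinearMap.snd R V₁ F)))
      (LinearMap.rTensor N (g ∘ₗ π)) ↔
    Function.Exact (LinearMap.rTensor N f) (LinearMap.rTensor N g) := by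
  set f₂ : (V₁ × F) →ₗ[R] F :=
    (s ∘ₗ f ∘ₗ LinearMap.fst R V₁ F) + (LinearMap.snd R V₁ F - s ∘ₗ π ∘ₗ LinearMap.snd R V₁ F)
    with hf₂
  have hπs : ∀ w : V₂, π (s w) = w := fun w => LinearMap.congr_fun hsπ w
  have hπf₂ : π ∘ₗ f₂ = f ∘ₗ LinearMap.fst R V₁ F := by
    ext t <;> simp [hf₂, hπs]
  have hf₂inl : f₂ ∘ₗ LinearMap.inl R V₁ F = s ∘ₗ f := by ext t; simp [hf₂]
  have hf₂inr : f₂ ∘ₗ LinearMap.inr R V₁ F = LinearMap.id - s ∘ₗ π := by ext t; simp [hf₂]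
  have hg₂f₂ : (g ∘ₗ π) ∘ₗ f₂ = 0 := by
    rw [LinearMap.comp_assoc, hπf₂, ← LinearMap.comp_assoc, hgf, LinearMap.zero_comp]
  constructor
  · intro h2
    intro y
    constructor
    · intro hy
      have h1 : LinearMap.rTensor N (g ∘ₗ π) (LinearMap.rTensor N s y) = 0 := by
        rw [← LinearMap.comp_apply, ← LinearMap.rTensor_comp, LinearMap.comp_assoc, hsπ,
          LinearMap.comp_id, LinearMap.rTensor_comp] at *
        · exact hy
      obtain ⟨t, ht⟩ := (h2 _).mp h1
      refine ⟨LinearMap.rTensor N (LinearMap.fst R V₁ F) t, ?_⟩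
      have : LinearMap.rTensor N π (LinearMap.rTensor N f₂ t) = LinearMap.rTensor N π
          (LinearMap.rTensor N s y) := by rw [ht]
      rw [← LinearMap.comp_apply, ← LinearMap.rTensor_comp, hπf₂, ← LinearMap.comp_apply,
        ← LinearMap.rTensor_comp, hsπ, LinearMap.rTensor_id, LinearMap.id_apply,
        LinearMap.rTensor_comp] at this
      rw [← this, LinearMap.comp_apply]
    · rintro ⟨u, rfl⟩
      rw [← LinearMap.comp_apply, ← LinearMap.rTensor_comp, hgf, LinearMap.rTensor_zero,
        LinearMap.zero_apply]
  · intro h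
    intro u
    constructor
    · intro hu
      have hπu : LinearMap.rTensor N g (LinearMap.rTensor N π u) = 0 := by
        rw [← LinearMap.comp_apply, ← LinearMap.rTensor_comp]
        exact hu
      obtain ⟨x, hx⟩ := (h _).mp hπu
      refine ⟨LinearMap.rTensor N (LinearMap.inl R V₁ F) x +
        LinearMap.rTensor N (LinearMap.inr R V₁ F) u, ?_⟩
      rw [map_add, ← LinearMap.comp_apply, ← LinearMap.rTensor_comp, hf₂inl,
        ← LinearMap.comp_apply (LinearMap.rTensor N f₂), ← LinearMap.rTensor_comp, hf₂inr,
        LinearMap.rTensor_comp, LinearMap.comp_apply, hx,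
        LinearMap.rTensor_sub, LinearMap.sub_apply, LinearMap.rTensor_id, LinearMap.id_apply,
        LinearMap.rTensor_comp, LinearMap.comp_apply]
      abel
    · rintro ⟨t, rfl⟩
      rw [← LinearMap.comp_apply, ← LinearMap.rTensor_comp, hg₂f₂, LinearMap.rTensor_zero,
        LinearMap.zero_apply]
end transfer
/-- Openness of the exactness locus for fibers of a complex of f.g. modules with
projective middle and right terms. -/
lemma isOpen_exact_fiber {R : Type} [CommRing R] {V₁ V₂ V₃ : Type}
    [AddCommGroup V₁] [Module R V₁] [AddCommGroup V₂] [Module R V₂]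
    [AddCommGroup V₃] [Module R V₃]
    [Module.Finite R V₁] [Module.Finite R V₂] [Module.Projective R V₂]
    [Module.Finite R V₃] [Module.Projective R V₃]
    (f : V₁ →ₗ[R] V₂) (g : V₂ →ₗ[R] V₃) (hgf : g ∘ₗ f = 0) :
    IsOpen {x : PrimeSpectrum R |
      Function.Exact
        (LinearMap.rTensor (IsLocalRing.ResidueField (Localization.AtPrime x.asIdeal)) f)
        (LinearMap.rTensor (IsLocalRing.ResidueField (Localization.AtPrime x.asIdeal)) g)} := by
  classical
  obtain ⟨n, π₂, s₂, hπ₂surj, -, hs₂⟩ := Module.Finite.exists_comp_eq_id_of_projective R V₂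
  obtain ⟨b, π₃, s₃, hπ₃surj, -, hs₃⟩ := Module.Finite.exists_comp_eq_id_of_projective R V₃
  -- the middle replacement
  set f₂ : (V₁ × (Fin n → R)) →ₗ[R] (Fin n → R) :=
    (s₂ ∘ₗ f ∘ₗ LinearMap.fst R V₁ (Fin n → R)) +
      (LinearMap.snd R V₁ (Fin n → R) - s₂ ∘ₗ π₂ ∘ₗ LinearMap.snd R V₁ (Fin n → R)) with hf₂def
  set g₂ : (Fin n → R) →ₗ[R] V₃ := g ∘ₗ π₂ with hg₂def
  have hπs₂ : π₂ ∘ₗ s₂ = LinearMap.id := hs₂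
  have hπs₃ : π₃ ∘ₗ s₃ = LinearMap.id := hs₃
  have hπs₂' : ∀ w, π₂ (s₂ w) = w := fun w => LinearMap.congr_fun hs₂ w
  have hπf₂ : π₂ ∘ₗ f₂ = f ∘ₗ LinearMap.fst R V₁ (Fin n → R) := by
    ext t <;> simp [hf₂def, hπs₂']
  have hg₂f₂ : g₂ ∘ₗ f₂ = 0 := by
    rw [hg₂def, LinearMap.comp_assoc, hπf₂, ← LinearMap.comp_assoc, hgf, LinearMap.zero_comp]
  obtain ⟨a, q, hq⟩ := Module.Finite.exists_fin' R (V₁ × (Fin n → R))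
  set Fmap : (Fin a → R) →ₗ[R] (Fin n → R) := f₂ ∘ₗ q with hFdef
  set Gmap : (Fin n → R) →ₗ[R] (Fin b → R) := s₃ ∘ₗ g₂ with hGdef
  have hGF : Gmap ∘ₗ Fmap = 0 := by
    have h1 : Gmap ∘ₗ Fmap = s₃ ∘ₗ (g₂ ∘ₗ f₂) ∘ₗ q := by
      rw [hGdef, hFdef]; ext t; simp
    rw [h1, hg₂f₂, LinearMap.zero_comp, LinearMap.comp_zero]
  -- pointwise equivalence of exactness conditions
  have key : ∀ x : PrimeSpectrum R,
      (Function.Exact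
        (LinearMap.rTensor (IsLocalRing.ResidueField (Localization.AtPrime x.asIdeal)) f)
        (LinearMap.rTensor (IsLocalRing.ResidueField (Localization.AtPrime x.asIdeal)) g)) ↔
      Function.Exact
        (((LinearMap.toMatrix' Fmap).map
          (algebraMap R (IsLocalRing.ResidueField (Localization.AtPrime x.asIdeal)))).mulVecLin)
        (((LinearMap.toMatrix' Gmap).map
          (algebraMap R (IsLocalRing.ResidueField (Localization.AtPrime x.asIdeal)))).mulVecLin)
      := by
    intro x
    set K := IsLocalRing.ResidueField (Localization.AtPrime x.asIdeal) with hK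
    rw [← exact_rTensor_middle_iff (N := K) s₂ π₂ hπs₂ f g hgf]
    rw [← hf₂def, ← hg₂def]
    -- insert the split injection s₃ on the right
    have hinj : Function.Injective (LinearMap.rTensor K s₃) := by
      have : LinearMap.rTensor K π₃ ∘ₗ LinearMap.rTensor K s₃ = LinearMap.id := by
        rw [← LinearMap.rTensor_comp, hπs₃, LinearMap.rTensor_id]
      intro u v huv
      have h2 := congrArg (LinearMap.rTensor K π₃) huv
      rw [← LinearMap.comp_apply, ← LinearMap.comp_apply, this] at h2
      simpa using h2
    rw [← hinj.comp_exact_iff_exact, ← LinearMap.rTensor_comp]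
    have hsurj : Function.Surjective (LinearMap.rTensor K q) :=
      LinearMap.rTensor_surjective K hq
    rw [← hsurj.comp_exact_iff_exact, ← LinearMap.rTensor_comp]
    have hladder := Function.Exact.iff_of_ladder_linearEquiv
      (e₁ := tensorPiEquiv (R := R) (K := K) (Fin a))
      (e₂ := tensorPiEquiv (R := R) (K := K) (Fin n))
      (e₃ := tensorPiEquiv (R := R) (K := K) (Fin b))
      (tensorPiEquiv_comm (K := K) Fmap) (tensorPiEquiv_comm (K := K) Gmap)
    rw [hFdef, hGdef] at hladder
    rw [← hladder]
    simp only [LinearMap.coe_restrictScalars]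
    exact Iff.rfl
  have hED : (LinearMap.toMatrix' Gmap) * (LinearMap.toMatrix' Fmap) = 0 := by
    rw [← LinearMap.toMatrix'_comp, hGF, map_zero]
  have hset : {x : PrimeSpectrum R |
      Function.Exact
        (LinearMap.rTensor (IsLocalRing.ResidueField (Localization.AtPrime x.asIdeal)) f)
        (LinearMap.rTensor (IsLocalRing.ResidueField (Localization.AtPrime x.asIdeal)) g)} =
      {x : PrimeSpectrum R |
      Function.Exact (M := Fin a → IsLocalRing.ResidueField (Localization.AtPrime x.asIdeal))
        (((LinearMap.toMatrix' Fmap).map (algebraMap R _)).mulVecLin)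
        (((LinearMap.toMatrix' Gmap).map (algebraMap R _)).mulVecLin)} :=
    Set.ext fun x => key x
  rw [hset]
  exact isOpen_exact_matrix _ _ hED

end Auxiliary

open Matrix LinearMap TensorProduct in
/-- Let `R` be a commutative Noetherian ring and `P` a perfect complex
of `R`-modules (we take a strict perfect complex: a bounded complex of finitely generated
projective modules).  Then for each `i` the locus `{x ∈ Spec R | Hⁱ(P ⊗^L_R k(x)) = 0}` is
open in `Spec R`; consequently `x ↦ sup (P ⊗^L_R k(x))` is upper semi-continuous and
`x ↦ inf (P ⊗^L_R k(x))` is lower semi-continuous on `Spec R`. -/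
theorem fiberwise_cohomology_vanishing_is_open
    (R : Type) [CommRing R] [IsNoetherianRing R]
    (P : CochainComplex (ModuleCat.{0} R) ℤ)
    -- `P` is a (strict) perfect complex
    (hproj : ∀ i, CategoryTheory.Projective (P.X i))
    (hfg : ∀ i, Module.Finite R (P.X i))
    (hbdd : ∃ a b : ℤ, ∀ i, (i < a ∨ b < i) → Limits.IsZero (P.X i)) :
    -- openness of the vanishing locus of `Hⁱ` of the fibers
    (∀ i : ℤ, IsOpen {x : PrimeSpectrum R | IsZero ((fiberComplex P x).homology i)}) ∧
    -- upper semi-continuity of `sup(P ⊗^L_R k(x))`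
    (∀ c : ℤ, IsClosed {x : PrimeSpectrum R |
      ∃ i : ℤ, c ≤ i ∧ ¬ IsZero ((fiberComplex P x).homology i)}) ∧
    -- lower semi-continuity of `inf(P ⊗^L_R k(x))`
    (∀ c : ℤ, IsClosed {x : PrimeSpectrum R |
      ∃ i : ℤ, i ≤ c ∧ ¬ IsZero ((fiberComplex P x).homology i)}) := by
  classical
  have hPmod : ∀ i, Module.Projective R (P.X i) := fun i => by
    rw [IsProjective.iff_projective]; exact hproj i
  -- the vanishing locus is the exactness locus of the fiber of the differentials
  have key : ∀ i : ℤ, {x : PrimeSpectrum R | IsZero ((fiberComplex P x).homology i)} =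
      {x : PrimeSpectrum R | Function.Exact
        (LinearMap.rTensor x.resField ((P.d (i-1) i).hom : P.X (i-1) →ₗ[R] P.X i))
        (LinearMap.rTensor x.resField ((P.d i (i+1)).hom : P.X i →ₗ[R] P.X (i+1)))} := by
    intro i
    ext x
    simp only [Set.mem_setOf_eq]
    rw [← HomologicalComplex.exactAt_iff_isZero_homology,
      HomologicalComplex.exactAt_iff' _ (i-1) i (i+1) (by simp) (by simp),
      ShortComplex.moduleCat_exact_iff_range_eq_ker, LinearMap.exact_iff]
    exact eq_comm
  have hopen : ∀ i : ℤ,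
      IsOpen {x : PrimeSpectrum R | IsZero ((fiberComplex P x).homology i)} := by
    intro i
    rw [key i]
    haveI := hfg (i-1); haveI := hfg i; haveI := hfg (i+1)
    haveI := hPmod i; haveI := hPmod (i+1)
    have h0 : ((P.d i (i+1)).hom : P.X i →ₗ[R] P.X (i+1)) ∘ₗ
        ((P.d (i-1) i).hom : P.X (i-1) →ₗ[R] P.X i) = 0 := by
      rw [← ModuleCat.hom_comp, P.d_comp_d (i-1) i (i+1), ModuleCat.hom_zero]
    exact isOpen_exact_fiber _ _ h0
  obtain ⟨a, b, hab⟩ := hbdd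
  have hzero : ∀ (x : PrimeSpectrum R) (i : ℤ), (i < a ∨ b < i) →
      IsZero ((fiberComplex P x).homology i) := by
    intro x i hi
    rw [← HomologicalComplex.exactAt_iff_isZero_homology, HomologicalComplex.exactAt_iff]
    apply ShortComplex.exact_of_isZero_X₂
    exact (MonoidalCategory.tensorRight (ModuleCat.of R x.resField)).map_isZero (hab i hi)
  refine ⟨hopen, ?_, ?_⟩
  · -- upper semi-continuity
    intro c
    have hset : {x : PrimeSpectrum R |
        ∃ i : ℤ, c ≤ i ∧ ¬ IsZero ((fiberComplex P x).homology i)} =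
        ⋃ i ∈ Finset.Icc c b,
          {x : PrimeSpectrum R | ¬ IsZero ((fiberComplex P x).homology i)} := by
      ext x
      simp only [Set.mem_setOf_eq, Set.mem_iUnion, Finset.mem_Icc, exists_prop]
      constructor
      · rintro ⟨i, hci, hi⟩
        refine ⟨i, ⟨hci, ?_⟩, hi⟩
        by_contra hbi
        push_neg at hbi
        exact hi (hzero x i (Or.inr hbi))
      · rintro ⟨i, ⟨h1, -⟩, hi⟩
        exact ⟨i, h1, hi⟩
    rw [hset]
    apply Set.Finite.isClosed_biUnion (Finset.finite_toSet _)
    intro i _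
    have : {x : PrimeSpectrum R | ¬ IsZero ((fiberComplex P x).homology i)} =
        {x : PrimeSpectrum R | IsZero ((fiberComplex P x).homology i)}ᶜ := rfl
    rw [this]
    exact (hopen i).isClosed_compl
  · -- lower semi-continuity
    intro c
    have hset : {x : PrimeSpectrum R |
        ∃ i : ℤ, i ≤ c ∧ ¬ IsZero ((fiberComplex P x).homology i)} =
        ⋃ i ∈ Finset.Icc a c,
          {x : PrimeSpectrum R | ¬ IsZero ((fiberComplex P x).homology i)} := by
      ext x
      simp only [Set.mem_setOf_eq, Set.mem_iUnion, Finset.mem_Icc, exists_prop]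
      constructor
      · rintro ⟨i, hic, hi⟩
        refine ⟨i, ⟨?_, hic⟩, hi⟩
        by_contra hai
        push_neg at hai
        exact hi (hzero x i (Or.inl hai))
      · rintro ⟨i, ⟨-, h1⟩, hi⟩
        exact ⟨i, h1, hi⟩
    rw [hset]
    apply Set.Finite.isClosed_biUnion (Finset.finite_toSet _)
    intro i _
    have : {x : PrimeSpectrum R | ¬ IsZero ((fiberComplex P x).homology i)} =
        {x : PrimeSpectrum R | IsZero ((fiberComplex P x).homology i)}ᶜ := rfl
    rw [this]
    exact (hopen i).isClosed_compl
end

section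
/- Let A be a smooth and compact dg algebra over a field and F : Perf(A) → Perf(A) a tensor endofunctor given by F(-) = (-) ⊗^L_A K for a perfect bimodule K, with entropy function h_t(F). Suppose F Udim Perf(A) = F Ldim Perf(A) (in particular F is not nilpotent). Then for all real t, h_t(F) = h_0(F) + (F Udim Perf(A))·t. -/
open CategoryTheory Limits Pretriangulated

universe u v

variable {T : Type u} [Category.{v} T] [HasZeroObject T] [Preadditive T] [HasShift T ℤ]
  [∀ n : ℤ, (CategoryTheory.shiftFunctor T n).Additive] [Pretriangulated T]

/-- The set of degrees `i` with `Hom^i(X, Y) ≠ 0`; its `sInf` is `e₋(X,Y)` and its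
`sSup` is `e₊(X,Y)`. -/
def TriDim.extSet (X Y : T) : Set ℤ :=
  {i : ℤ | ∃ f : X ⟶ (shiftFunctor T i).obj Y, f ≠ 0}

/-- Iterates `F^N G` of an endofunctor applied to an object. -/
def TriDim.iterObj (F : T ⥤ T) (G : T) : ℕ → T
  | 0 => G
  | m + 1 => F.obj (TriDim.iterObj F G m)

/-- Auxiliary: bounds on the log-ratio of weighted exponential sums. -/
private lemma log_ratio_bounds (t m M : ℝ) (s : Finset ℤ) (d : ℤ → ℝ)
    (hd : ∀ n ∈ s, 0 ≤ d n) (hpos : ∃ n ∈ s, 0 < d n)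
    (hm : ∀ n ∈ s, m ≤ -(n : ℝ) * t) (hM : ∀ n ∈ s, -(n : ℝ) * t ≤ M) :
    m ≤ Real.log (∑ n ∈ s, d n * Real.exp (-(n : ℝ) * t))
        - Real.log (∑ n ∈ s, d n * Real.exp (-(n : ℝ) * 0)) ∧
    Real.log (∑ n ∈ s, d n * Real.exp (-(n : ℝ) * t))
        - Real.log (∑ n ∈ s, d n * Real.exp (-(n : ℝ) * 0)) ≤ M := by
  obtain ⟨n0, hn0, hd0⟩ := hpos
  have hA : 0 < ∑ n ∈ s, d n * Real.exp (-(n : ℝ) * t) :=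
    Finset.sum_pos' (fun i hi => mul_nonneg (hd i hi) (Real.exp_pos _).le)
      ⟨n0, hn0, mul_pos hd0 (Real.exp_pos _)⟩
  have hB : 0 < ∑ n ∈ s, d n * Real.exp (-(n : ℝ) * 0) :=
    Finset.sum_pos' (fun i hi => mul_nonneg (hd i hi) (Real.exp_pos _).le)
      ⟨n0, hn0, mul_pos hd0 (Real.exp_pos _)⟩
  have hup : ∑ n ∈ s, d n * Real.exp (-(n : ℝ) * t)
      ≤ Real.exp M * ∑ n ∈ s, d n * Real.exp (-(n : ℝ) * 0) := by
    rw [Finset.mul_sum]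
    refine Finset.sum_le_sum fun n hn => ?_
    have hexp : Real.exp (-(n : ℝ) * t) ≤ Real.exp M := Real.exp_le_exp.2 (hM n hn)
    calc d n * Real.exp (-(n : ℝ) * t) ≤ d n * Real.exp M :=
          mul_le_mul_of_nonneg_left hexp (hd n hn)
      _ = Real.exp M * (d n * Real.exp (-(n : ℝ) * 0)) := by
          rw [mul_zero, Real.exp_zero, mul_one]; ring
  have hlo : Real.exp m * ∑ n ∈ s, d n * Real.exp (-(n : ℝ) * 0)
      ≤ ∑ n ∈ s, d n * Real.exp (-(n : ℝ) * t) := by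
    rw [Finset.mul_sum]
    refine Finset.sum_le_sum fun n hn => ?_
    have hexp : Real.exp m ≤ Real.exp (-(n : ℝ) * t) := Real.exp_le_exp.2 (hm n hn)
    calc Real.exp m * (d n * Real.exp (-(n : ℝ) * 0))
        = d n * Real.exp m := by rw [mul_zero, Real.exp_zero, mul_one]; ring
      _ ≤ d n * Real.exp (-(n : ℝ) * t) := mul_le_mul_of_nonneg_left hexp (hd n hn)
  constructor
  · have h1 : Real.log (Real.exp m * ∑ n ∈ s, d n * Real.exp (-(n : ℝ) * 0))
        ≤ Real.log (∑ n ∈ s, d n * Real.exp (-(n : ℝ) * t)) := by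
      apply Real.log_le_log (by positivity) hlo
    rw [Real.log_mul (Real.exp_ne_zero m) hB.ne', Real.log_exp] at h1
    linarith
  · have h1 : Real.log (∑ n ∈ s, d n * Real.exp (-(n : ℝ) * t))
        ≤ Real.log (Real.exp M * ∑ n ∈ s, d n * Real.exp (-(n : ℝ) * 0)) := by
      apply Real.log_le_log hA hup
    rw [Real.log_mul (Real.exp_ne_zero M) hB.ne', Real.log_exp] at h1
    linarith

open Filter in
/-- Let `A` be a smooth and compact dg algebra over a field `k` and
`F = (-) ⊗^L_A K : Perf(A) → Perf(A)` a tensor endofunctor with entropy function `h_t(F)`,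
defined by `h t = lim_N (1/N) · ln ∑_n dim Hom^n(G, F^N G) · e^{-nt}` for a generator `G`
(hypothesis `hentropy`).  Suppose the upper and the lower `F`-dimensions of `Perf(A)`
coincide, both equal to `u` (hypotheses `hU`, `hL`); in particular `F` is not nilpotent
(`hne`).  Then `h_t(F) = h_0(F) + u·t` for all real `t`.
Here `T = Perf(A)` with Ext-finiteness hypotheses `hfin`, `hfd`, and `G` a generator. -/
theorem entropy_affine_of_equal_dimensions
    {k : Type} [Field k] [CategoryTheory.Linear k T]
    (F : T ⥤ T) (G : T)
    -- `T = Perf(A)` is Ext-finite (smoothness and compactness of `A`)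
    (hfin : ∀ X Y : T, (TriDim.extSet X Y).Finite)
    (hfd : ∀ (X Y : T) (i : ℤ), FiniteDimensional k (X ⟶ (shiftFunctor T i).obj Y))
    -- `G` generates `T`
    (hgen : ∀ X : T, ∃ m : ℕ, X ∈ TriDim.thick G m)
    -- `F` is not nilpotent
    (hne : ∀ N : ℕ, (TriDim.extSet G (TriDim.iterObj F G N)).Nonempty)
    -- `h : ℝ → ℝ` is the entropy function of `F`
    (h : ℝ → ℝ)
    (hentropy : ∀ t : ℝ, Tendsto (fun N : ℕ =>
      (1 / (N : ℝ)) * Real.log (∑ n ∈ (hfin G (TriDim.iterObj F G N)).toFinset,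
        (Module.finrank k (G ⟶ (shiftFunctor T n).obj (TriDim.iterObj F G N)) : ℝ) *
          Real.exp (-(n : ℝ) * t))) atTop (nhds (h t)))
    -- `F Udim Perf(A) = F Ldim Perf(A) = u`
    (u : ℝ)
    (hU : Tendsto (fun N : ℕ =>
      (-(sInf (TriDim.extSet G (TriDim.iterObj F G N)) : ℤ) : ℝ) / (N : ℝ))
      atTop (nhds u))
    (hL : Tendsto (fun N : ℕ =>
      (-(sSup (TriDim.extSet G (TriDim.iterObj F G N)) : ℤ) : ℝ) / (N : ℝ))
      atTop (nhds u)) :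
    ∀ t : ℝ, h t = h 0 + u * t := by
  intro t
  -- abbreviations
  set I : ℕ → T := TriDim.iterObj F G with hIdef
  set e : ℕ → Set ℤ := fun N => TriDim.extSet G (I N) with heDef
  set d : ℕ → ℤ → ℝ :=
    fun N n => (Module.finrank k (G ⟶ (shiftFunctor T n).obj (I N)) : ℝ) with hdDef
  set iN : ℕ → ℤ := fun N => sInf (e N) with hiDef
  set sN : ℕ → ℤ := fun N => sSup (e N) with hsDef
  -- the log-ratio is bounded between min and max
  have hdd : ∀ (N : ℕ), ∀ n ∈ (hfin G (I N)).toFinset, 0 ≤ d N n :=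
    fun N n _ => by positivity
  have hddpos : ∀ N : ℕ, ∃ n ∈ (hfin G (I N)).toFinset, 0 < d N n := by
    intro N
    obtain ⟨n, hn⟩ := hne N
    refine ⟨n, (hfin G (I N)).mem_toFinset.2 hn, ?_⟩
    obtain ⟨f, hf⟩ := hn
    have : Nontrivial (G ⟶ (shiftFunctor T n).obj (I N)) := nontrivial_of_ne f 0 hf
    have h1 : 0 < Module.finrank k (G ⟶ (shiftFunctor T n).obj (I N)) :=
      Module.finrank_pos
    rw [hdDef]
    beta_reduce
    exact_mod_cast h1
  have hbounds : ∀ N : ℕ,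
      min (-(iN N : ℝ) * t) (-(sN N : ℝ) * t)
        ≤ Real.log (∑ n ∈ (hfin G (I N)).toFinset, d N n * Real.exp (-(n : ℝ) * t))
          - Real.log (∑ n ∈ (hfin G (I N)).toFinset, d N n * Real.exp (-(n : ℝ) * 0)) ∧
      Real.log (∑ n ∈ (hfin G (I N)).toFinset, d N n * Real.exp (-(n : ℝ) * t))
          - Real.log (∑ n ∈ (hfin G (I N)).toFinset, d N n * Real.exp (-(n : ℝ) * 0))
        ≤ max (-(iN N : ℝ) * t) (-(sN N : ℝ) * t) := by
    intro N
    refine log_ratio_bounds t _ _ _ (d N) (hdd N) (hddpos N) ?_ ?_ <;>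
    · intro n hn
      have hn' : n ∈ e N := (hfin G (I N)).mem_toFinset.1 hn
      have h1 : (iN N : ℝ) ≤ (n : ℝ) := by
        exact_mod_cast csInf_le ((hfin G (I N)).bddBelow) hn'
      have h2 : (n : ℝ) ≤ (sN N : ℝ) := by
        exact_mod_cast le_csSup ((hfin G (I N)).bddAbove) hn'
      rcases le_total 0 t with ht | ht
      · first
        | exact min_le_of_right_le (by nlinarith)
        | exact le_max_of_le_left (by nlinarith)
      · first
        | exact min_le_of_left_le (by nlinarith)
        | exact le_max_of_le_right (by nlinarith)
  -- the squeezed sequence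
  have hsq : Tendsto (fun N : ℕ =>
      (1 / (N : ℝ)) * Real.log (∑ n ∈ (hfin G (I N)).toFinset,
        d N n * Real.exp (-(n : ℝ) * t))
      - (1 / (N : ℝ)) * Real.log (∑ n ∈ (hfin G (I N)).toFinset,
        d N n * Real.exp (-(n : ℝ) * 0))) atTop (nhds (u * t)) := by
    have hUt : Tendsto (fun N : ℕ => (-(iN N) : ℝ) / (N : ℝ) * t) atTop
        (nhds (u * t)) := by
      have := hU.mul_const t
      simpa using this
    have hLt : Tendsto (fun N : ℕ => (-(sN N) : ℝ) / (N : ℝ) * t) atTop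
        (nhds (u * t)) := by
      have := hL.mul_const t
      simpa using this
    have hmin : Tendsto (fun N : ℕ =>
        min ((-(iN N) : ℝ) / (N : ℝ) * t) ((-(sN N) : ℝ) / (N : ℝ) * t)) atTop
        (nhds (u * t)) := by
      have := hUt.min hLt
      simpa [min_self] using this
    have hmax : Tendsto (fun N : ℕ =>
        max ((-(iN N) : ℝ) / (N : ℝ) * t) ((-(sN N) : ℝ) / (N : ℝ) * t)) atTop
        (nhds (u * t)) := by
      have := hUt.max hLt
      simpa [max_self] using this
    refine tendsto_of_tendsto_of_tendsto_of_le_of_le hmin hmax ?_ ?_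
    · intro N
      beta_reduce
      have h1 := (hbounds N).1
      have hN0 : (0 : ℝ) ≤ 1 / (N : ℝ) := by positivity
      have := mul_le_mul_of_nonneg_left h1 hN0
      rw [mul_min_of_nonneg _ _ hN0] at this
      calc min ((-(iN N) : ℝ) / (N : ℝ) * t) ((-(sN N) : ℝ) / (N : ℝ) * t)
          = min ((1 / (N : ℝ)) * (-(iN N : ℝ) * t))
              ((1 / (N : ℝ)) * (-(sN N : ℝ) * t)) := by
            congr 1 <;> push_cast <;> ring
        _ ≤ _ := by rw [← mul_sub]; exact this
    · intro N
      beta_reduce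
      have h1 := (hbounds N).2
      have hN0 : (0 : ℝ) ≤ 1 / (N : ℝ) := by positivity
      have := mul_le_mul_of_nonneg_left h1 hN0
      rw [mul_max_of_nonneg _ _ hN0] at this
      calc (1 / (N : ℝ)) * Real.log (∑ n ∈ (hfin G (I N)).toFinset,
              d N n * Real.exp (-(n : ℝ) * t))
            - (1 / (N : ℝ)) * Real.log (∑ n ∈ (hfin G (I N)).toFinset,
              d N n * Real.exp (-(n : ℝ) * 0))
          ≤ max ((1 / (N : ℝ)) * (-(iN N : ℝ) * t))
              ((1 / (N : ℝ)) * (-(sN N : ℝ) * t)) := by rw [← mul_sub]; exact this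
        _ = max ((-(iN N) : ℝ) / (N : ℝ) * t) ((-(sN N) : ℝ) / (N : ℝ) * t) := by
            congr 1 <;> push_cast <;> ring
  have hlim : Tendsto (fun N : ℕ =>
      (1 / (N : ℝ)) * Real.log (∑ n ∈ (hfin G (I N)).toFinset,
        d N n * Real.exp (-(n : ℝ) * t))
      - (1 / (N : ℝ)) * Real.log (∑ n ∈ (hfin G (I N)).toFinset,
        d N n * Real.exp (-(n : ℝ) * 0))) atTop (nhds (h t - h 0)) :=
    (hentropy t).sub (hentropy 0)
  have := tendsto_nhds_unique hlim hsq
  linarith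
end
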